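/- arXiv:2306.07259 — 3 statements merged into one kernel-verified Lean document; each statement's English description precedes it below -/
import Mathlib

section
/- Let H be a real-analytic hypersurface in an open set U ⊆ ℂⁿ (n ≥ 2) that is curve-supported at a point p ∈ H by a support curve C such that C ∖ {p} is contained in a connected component V of U ∖ H. Then for every compact set K ⊆ H that is a neighborhood of p in H (i.e., H ∩ B_δ(p) ⊆ K for some δ > 0), there exists ε > 0 such that B_ε(p) ∖ V ⊆ K̂_rat. -/
open Metric

noncomputable section

/-- `H` is a (singular) real-analytic hypersurface in the open set `U ⊆ ℂⁿ`:
`H = {z ∈ U : ρ z = 0}` for some real-analytic `ρ : U → ℝ` (analytic over `ℝ`),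
`H` nonempty, and `ρ` does not vanish identically on any connected component of `U`. -/
def IsRealAnalyticHypersurface {n : ℕ} (U H : Set (EuclideanSpace ℂ (Fin n))) : Prop :=
  IsOpen U ∧ H.Nonempty ∧
    ∃ ρ : EuclideanSpace ℂ (Fin n) → ℝ,
      AnalyticOnNhd ℝ ρ U ∧
      H = {z | z ∈ U ∧ ρ z = 0} ∧
      ∀ z ∈ U, ∃ w ∈ connectedComponentIn U z, ρ w ≠ 0

/-- `C = φ '' 𝔻` is a support curve for `H` at `p`, parametrized by the nonconstant
holomorphic map `φ : 𝔻 → U` with `φ 0 = p` and `C ∩ H = {p}`. -/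
def IsSupportCurveVia {n : ℕ} (U H : Set (EuclideanSpace ℂ (Fin n)))
    (p : EuclideanSpace ℂ (Fin n)) (φ : ℂ → EuclideanSpace ℂ (Fin n))
    (C : Set (EuclideanSpace ℂ (Fin n))) : Prop :=
  DifferentiableOn ℂ φ (ball 0 1) ∧
  Set.MapsTo φ (ball 0 1) U ∧
  (∃ a ∈ ball (0 : ℂ) 1, ∃ b ∈ ball (0 : ℂ) 1, φ a ≠ φ b) ∧
  φ 0 = p ∧
  C = φ '' ball 0 1 ∧
  C ∩ H = {p}

/-- `C` is a support curve for `H` at `p`. -/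
def IsSupportCurve {n : ℕ} (U H : Set (EuclideanSpace ℂ (Fin n)))
    (p : EuclideanSpace ℂ (Fin n)) (C : Set (EuclideanSpace ℂ (Fin n))) : Prop :=
  ∃ φ : ℂ → EuclideanSpace ℂ (Fin n), IsSupportCurveVia U H p φ C

/-- `V` is a connected component of `U \ H`. -/
def IsComponentOfComplement {n : ℕ} (U H V : Set (EuclideanSpace ℂ (Fin n))) : Prop :=
  ∃ x ∈ U \ H, V = connectedComponentIn (U \ H) x

/-- `H` is curve-supported from two sides at `p`: there are two support curves at `p`
lying (off `p`) in two distinct connected components of `U \ H`. -/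
def CurveSupportedFromTwoSides {n : ℕ} (U H : Set (EuclideanSpace ℂ (Fin n)))
    (p : EuclideanSpace ℂ (Fin n)) : Prop :=
  ∃ C₁ C₂ V₁ V₂ : Set (EuclideanSpace ℂ (Fin n)),
    IsSupportCurve U H p C₁ ∧ IsSupportCurve U H p C₂ ∧
    IsComponentOfComplement U H V₁ ∧ IsComponentOfComplement U H V₂ ∧
    V₁ ≠ V₂ ∧ C₁ \ {p} ⊆ V₁ ∧ C₂ \ {p} ⊆ V₂

/-- `ψ` is an analytic disc attached to `S`: a nonconstant continuous map on the closed
unit disc, holomorphic on the open unit disc, with boundary values in `S`. -/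
def IsAttachedDisc {n : ℕ} (S : Set (EuclideanSpace ℂ (Fin n)))
    (ψ : ℂ → EuclideanSpace ℂ (Fin n)) : Prop :=
  ContinuousOn ψ (closedBall 0 1) ∧
  DifferentiableOn ℂ ψ (ball 0 1) ∧
  (∃ a ∈ closedBall (0 : ℂ) 1, ∃ b ∈ closedBall (0 : ℂ) 1, ψ a ≠ ψ b) ∧
  ψ '' sphere 0 1 ⊆ S

/-- The polynomial hull of `K ⊆ ℂⁿ`. -/
def polyHull {n : ℕ} (K : Set (EuclideanSpace ℂ (Fin n))) : Set (EuclideanSpace ℂ (Fin n)) :=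
  {z | ∀ P : MvPolynomial (Fin n) ℂ,
    ‖MvPolynomial.eval (fun i => z i) P‖ ≤
      ⨆ w : K, ‖MvPolynomial.eval (fun i => (w : EuclideanSpace ℂ (Fin n)) i) P‖}

/-- The rational hull of `K ⊆ ℂⁿ`. -/
def ratHull {n : ℕ} (K : Set (EuclideanSpace ℂ (Fin n))) : Set (EuclideanSpace ℂ (Fin n)) :=
  {z | ∀ P : MvPolynomial (Fin n) ℂ,
    MvPolynomial.eval (fun i => z i) P ∈
      (fun w : EuclideanSpace ℂ (Fin n) => MvPolynomial.eval (fun i => w i) P) '' K}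


/-!
Suppose `q ∈ B_ε(p) \ V` and some polynomial `P` takes the value `P q` nowhere on `K`. Then
`Q = P - P q` vanishes at `q` but not on `K`, so near `p` its zero set `Y` avoids `H`. Translate a
small disc `φ(D_r)` of the support curve by `t (q - p)`, `0 ≤ t ≤ 1`: its boundary circle stays
in `V` for all `t`, the disc at `t = 0` lies in `C \ {p} ⊆ V` away from `p`, and the disc at
`t = 1` passes through `q`. Given a relatively clopen piece `A` of `Y` containing `q`, look at the
first time `t₀` a translated disc meets `A`. By the maximum modulus principle applied to `1 / Q`
along the discs, a zero cannot appear first in the interior of the disc, so the contact happens at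
`t₀ = 0` or on the boundary circle, and in both cases inside `V`. Thus every clopen piece of `Y`
through `q` meets `V`; by compactness the connected component of `q` in `Y` meets `closure V`,
and as a connected subset of `U \ H` it lies in `V`, contradicting `q ∉ V`.
-/

open Set Filter Topology

theorem connectedComponent_inter_nonempty_of_forall_isClopen {X : Type*} [TopologicalSpace X]
    [CompactSpace X] [T2Space X] {L : Set X} (hL : IsClosed L) {x : X}
    (h : ∀ W, IsClopen W → x ∈ W → (W ∩ L).Nonempty) :
    (connectedComponent x ∩ L).Nonempty := by
  let ι := {W : Set X // IsClopen W ∧ x ∈ W}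
  have : Nonempty ι := ⟨⟨univ, isClopen_univ, trivial⟩⟩
  have hdir : Directed (· ⊇ ·) fun W : ι => (W : Set X) ∩ L := fun W₁ W₂ =>
    ⟨⟨W₁ ∩ W₂, W₁.2.1.inter W₂.2.1, W₁.2.2, W₂.2.2⟩,
      inter_subset_inter_left _ inter_subset_left, inter_subset_inter_left _ inter_subset_right⟩
  obtain ⟨a, ha⟩ := IsCompact.nonempty_iInter_of_directed_nonempty_isCompact_isClosed _ hdir
    (fun W => h W W.2.1 W.2.2) (fun W => (W.2.1.isClosed.inter hL).isCompact)
    fun W => W.2.1.isClosed.inter hL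
  rw [mem_iInter] at ha
  refine ⟨a, ?_, (ha ⟨univ, isClopen_univ, trivial⟩).2⟩
  rw [connectedComponent_eq_iInter_isClopen, mem_iInter]
  exact fun W => (ha W).1

theorem mem_connectedComponentIn_of_mem_closure {E : Type*} [TopologicalSpace E]
    [LocallyConnectedSpace E] {O : Set E} {x y : E} (hO : IsOpen O) (hy : y ∈ O)
    (hcl : y ∈ closure (connectedComponentIn O x)) : y ∈ connectedComponentIn O x := by
  obtain ⟨z, hzy, hzx⟩ :=
    mem_closure_iff.1 hcl _ hO.connectedComponentIn (mem_connectedComponentIn hy)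
  rw [connectedComponentIn_eq hzx, ← connectedComponentIn_eq hzy]
  exact mem_connectedComponentIn hy

theorem mem_connectedComponentIn_of_forall_isCompact_meets {E : Type*} [TopologicalSpace E]
    [T2Space E] [LocallyConnectedSpace E] {O Y : Set E} {x q : E} (hO : IsOpen O)
    (hY : IsCompact Y) (hYO : Y ⊆ O) (hq : q ∈ Y)
    (h : ∀ A ⊆ Y, IsCompact A → IsClosed (Y \ A) → q ∈ A →
      (A ∩ connectedComponentIn O x).Nonempty) :
    q ∈ connectedComponentIn O x := by
  have := isCompact_iff_compactSpace.mp hY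
  obtain ⟨a, ha_comp, ha_cl⟩ := connectedComponent_inter_nonempty_of_forall_isClopen
    (isClosed_closure.preimage continuous_subtype_val) (x := ⟨q, hq⟩) fun W hW hqW => by
      have hdiff : Y \ Subtype.val '' W = Subtype.val '' Wᶜ := by
        rw [image_compl_eq_range_sdiff_image Subtype.val_injective, Subtype.range_coe]
      obtain ⟨y, ⟨y', hy'W, rfl⟩, hyV⟩ := h _ (Subtype.coe_image_subset Y W)
        (hW.isClosed.isCompact.image continuous_subtype_val)
        (hdiff ▸ (hW.compl.isClosed.isCompact.image continuous_subtype_val).isClosed)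
        ⟨_, hqW, rfl⟩
      exact ⟨y', hy'W, subset_closure hyV⟩
  have haV := mem_connectedComponentIn_of_mem_closure hO (hYO a.2) ha_cl
  rw [connectedComponentIn_eq haV]
  refine (isPreconnected_connectedComponent.image _ continuous_subtype_val.continuousOn
    |>.subset_connectedComponentIn ⟨a, ha_comp, rfl⟩ ?_) ⟨_, mem_connectedComponent, rfl⟩
  rintro _ ⟨y, -, rfl⟩
  exact hYO y.2

theorem eventually_exists_zero_of_ne_zero_on_frontier {X : Type*} [TopologicalSpace X]
    {F : X → ℂ → ℂ} {ω : Set ℂ} {t₀ : X} {x₀ : ℂ} (hω : Bornology.IsBounded ω)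
    (hF : ContinuousOn (Function.uncurry F) (univ ×ˢ closure ω))
    (hdiff : ∀ t, DifferentiableOn ℂ (F t) ω) (hx₀ : x₀ ∈ closure ω) (hzero : F t₀ x₀ = 0)
    (hfr : ∀ x ∈ frontier ω, F t₀ x ≠ 0) :
    ∀ᶠ t in 𝓝 t₀, ∃ x ∈ closure ω, F t x = 0 := by
  have hcont : ∀ t, ContinuousOn (F t) (closure ω) := fun t =>
    hF.comp (Continuous.prodMk_right t).continuousOn fun x hx => ⟨trivial, hx⟩
  have hfr_compact : IsCompact (frontier ω) :=
    isCompact_of_isClosed_isBounded isClosed_frontier (hω.closure.subset frontier_subset_closure)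
  obtain ⟨m, hm, hmF⟩ : ∃ m, 0 < m ∧ ∀ x ∈ frontier ω, m ≤ ‖F t₀ x‖ :=
    hfr_compact.exists_forall_le'
      ((hcont t₀).mono frontier_subset_closure).norm fun x hx => norm_pos_iff.2 (hfr x hx)
  have hfr_large : ∀ᶠ t in 𝓝 t₀, ∀ x ∈ frontier ω, m / 2 < ‖F t x‖ := by
    have : ∀ᶠ t in 𝓝 t₀, ∀ x ∈ frontier ω, x ∈ closure ω → m / 2 < ‖F t x‖ := by
      refine hfr_compact.eventually_forall_of_forall_eventually fun x hx => ?_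
      have hx' : (t₀, x) ∈ univ ×ˢ closure ω := ⟨trivial, frontier_subset_closure hx⟩
      have := (hF _ hx').norm.eventually_const_lt ((half_lt_self hm).trans_le (hmF x hx))
      exact (eventually_nhdsWithin_iff.1 this).mono fun z hz hzω => hz ⟨trivial, hzω⟩
    exact this.mono fun t ht x hx => ht x hx (frontier_subset_closure hx)
  have hx₀_small : ∀ᶠ t in 𝓝 t₀, ‖F t x₀‖ < m / 2 := by
    have : ContinuousAt (fun t => F t x₀) t₀ :=
      ((hF _ ⟨trivial, hx₀⟩).comp (Continuous.prodMk_left x₀).continuousWithinAt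
        fun t _ => ⟨trivial, hx₀⟩).continuousAt univ_mem
    exact this.norm.eventually_lt_const (by simpa [hzero] using half_pos hm)
  filter_upwards [hfr_large, hx₀_small] with t hlarge hsmall
  by_contra! hne
  have hinv : DiffContOnCl ℂ (fun x => (F t x)⁻¹) ω :=
    ⟨(hdiff t).inv fun x hx => hne x (subset_closure hx), (hcont t).inv₀ hne⟩
  have := Complex.norm_le_of_forall_mem_frontier_norm_le hω hinv
    (fun x hx => by rw [norm_inv]; exact inv_anti₀ (half_pos hm) (hlarge x hx).le) hx₀
  rw [norm_inv, inv_le_inv₀ (norm_pos_iff.2 (hne x₀ hx₀)) (half_pos hm)] at this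
  exact hsmall.not_ge this

theorem eventually_exists_zero_near {X E : Type*} [TopologicalSpace X] [NormedAddCommGroup E]
    [NormedSpace ℂ E] {ψ : X → ℂ → E} {Q : E → ℂ} {A : Set E} {r η : ℝ} {t₀ : X} {x₀ : ℂ}
    (hψc : ContinuousOn (Function.uncurry ψ) (univ ×ˢ closedBall 0 r))
    (hψd : ∀ t, DifferentiableOn ℂ (ψ t) (ball 0 r)) (hQ : Differentiable ℂ Q) (hη : 0 < η)
    (hx₀ : x₀ ∈ closedBall 0 r) (hx₀A : ψ t₀ x₀ ∈ A) (hQx₀ : Q (ψ t₀ x₀) = 0)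
    (hnear : ∀ x ∈ closedBall 0 r, Q (ψ t₀ x) = 0 → infDist (ψ t₀ x) A < η → ψ t₀ x ∈ A)
    (hsphere : ∀ x ∈ sphere 0 r, Q (ψ t₀ x) = 0 → η / 2 < infDist (ψ t₀ x) A) :
    ∀ᶠ t in 𝓝 t₀, ∃ x ∈ closedBall 0 r, Q (ψ t x) = 0 ∧ infDist (ψ t x) A < η := by
  set W := ball (0 : ℂ) r ∩ (fun x => infDist (ψ t₀ x) A) ⁻¹' Iio (η / 2)
  have hdist_c : ContinuousOn (fun x => infDist (ψ t₀ x) A) (closedBall 0 r) :=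
    (continuous_infDist_pt A).comp_continuousOn
      (hψc.comp (Continuous.prodMk_right t₀).continuousOn fun x hx => ⟨trivial, hx⟩)
  have hW_open : IsOpen W :=
    (hdist_c.mono ball_subset_closedBall).isOpen_inter_preimage isOpen_ball isOpen_Iio
  have hW_closure :
      closure W ⊆ closedBall 0 r ∩ (fun x => infDist (ψ t₀ x) A) ⁻¹' Iic (η / 2) :=
    closure_minimal (inter_subset_inter ball_subset_closedBall (preimage_mono Iio_subset_Iic_self))
      (hdist_c.preimage_isClosed_of_isClosed isClosed_closedBall isClosed_Iic)
  have hx₀W : x₀ ∈ W := by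
    refine ⟨(mem_closedBall.1 hx₀).lt_of_ne fun h => ?_, show infDist (ψ t₀ x₀) A < η / 2 by
      rw [infDist_zero_of_mem hx₀A]; positivity⟩
    have := hsphere x₀ (mem_sphere.2 h) hQx₀
    rw [infDist_zero_of_mem hx₀A] at this
    linarith
  have hfr : ∀ x ∈ frontier W, Q (ψ t₀ x) ≠ 0 := by
    rw [hW_open.frontier_eq]
    rintro x ⟨hx_cl, hx_W⟩ h0
    obtain ⟨hx_ball, hx_d : infDist (ψ t₀ x) A ≤ η / 2⟩ := hW_closure hx_cl
    by_cases hx_r : x ∈ ball (0 : ℂ) r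
    · have hd : ¬ infDist (ψ t₀ x) A < η / 2 := fun h => hx_W ⟨hx_r, h⟩
      rw [infDist_zero_of_mem (hnear x hx_ball h0 (by linarith))] at hd
      exact hd (half_pos hη)
    · have hx_s : x ∈ sphere (0 : ℂ) r :=
        mem_sphere.2 ((mem_closedBall.1 hx_ball).antisymm (not_lt.1 hx_r))
      exact (hsphere x hx_s h0).not_ge hx_d
  have hzero := eventually_exists_zero_of_ne_zero_on_frontier (F := fun t x => Q (ψ t x))
    (isBounded_ball.subset inter_subset_left)
    (hQ.continuous.comp_continuousOn
      (hψc.mono (prod_mono le_rfl (hW_closure.trans inter_subset_left))))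
    (fun t => hQ.comp_differentiableOn ((hψd t).mono inter_subset_left))
    (subset_closure hx₀W) hQx₀ hfr
  obtain ⟨N, hN, hNclose⟩ := (isCompact_closedBall (0 : ℂ) r).mem_uniformity_of_prod hψc
    (mem_univ t₀) (dist_mem_uniformity (half_pos hη))
  filter_upwards [hzero, nhdsWithin_univ t₀ ▸ hN] with t ⟨x, hx_cl, hx0⟩ ht
  obtain ⟨hx_ball, hx_d : infDist (ψ t₀ x) A ≤ η / 2⟩ := hW_closure hx_cl
  refine ⟨x, hx_ball, hx0, ?_⟩
  linarith [infDist_le_infDist_add_dist (x := ψ t x) (y := ψ t₀ x) (s := A),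
    show dist (ψ t x) (ψ t₀ x) < η / 2 from hNclose t ht x hx_ball]

theorem exists_radius_ne_on_sphere {E : Type*} [NormedAddCommGroup E] [NormedSpace ℂ E]
    [CompleteSpace E] {φ : ℂ → E} (hφ : DifferentiableOn ℂ φ (ball 0 1))
    (hφc : ∃ a ∈ ball (0 : ℂ) 1, ∃ b ∈ ball (0 : ℂ) 1, φ a ≠ φ b) {σ : ℝ} (hσ : 0 < σ) :
    ∃ r, 0 < r ∧ r < 1 ∧ (∀ x ∈ closedBall (0 : ℂ) r, φ x ∈ ball (φ 0) σ) ∧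
      ∀ x ∈ sphere (0 : ℂ) r, φ x ≠ φ 0 := by
  have hana : AnalyticOnNhd ℂ φ (ball 0 1) := hφ.analyticOnNhd isOpen_ball
  have h0 : (0 : ℂ) ∈ ball 0 1 := mem_ball_self one_pos
  have hne : ∀ᶠ z in 𝓝[≠] 0, φ z ≠ φ 0 := by
    refine ((hana 0 h0).eventually_eq_or_eventually_ne analyticAt_const).resolve_left
      fun hconst => ?_
    obtain ⟨a, ha, b, hb, hab⟩ := hφc
    have hEq := hana.eqOn_of_preconnected_of_eventuallyEq analyticOnNhd_const
      (convex_ball 0 1).isPreconnected h0 hconst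
    exact hab ((hEq ha).trans (hEq hb).symm)
  have hnear : ∀ᶠ z in 𝓝 0, φ z ∈ ball (φ 0) σ :=
    (hφ.continuousOn.continuousAt (isOpen_ball.mem_nhds h0)).eventually (ball_mem_nhds _ hσ)
  obtain ⟨ρ, hρ, hρP⟩ := Metric.eventually_nhds_iff.1 ((eventually_nhdsWithin_iff.1 hne).and hnear)
  have hr : min ρ 1 / 2 < ρ := by linarith [min_le_left ρ 1]
  refine ⟨min ρ 1 / 2, by positivity, by linarith [min_le_right ρ 1],
    fun x hx => (hρP ((mem_closedBall.1 hx).trans_lt hr)).2, fun x hx => ?_⟩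
  have hx0 : x ≠ 0 := ne_of_mem_sphere hx (by positivity)
  exact (hρP ((mem_sphere.1 hx).trans_lt hr)).1 hx0

theorem exists_first_mem_of_isClosed {Y E : Type*} [TopologicalSpace Y] [T2Space Y]
    [TopologicalSpace E]
    {ψ : ℝ → Y → E} {S : Set Y} {Z : Set E} {x₁ : Y}
    (hψ : ContinuousOn (Function.uncurry ψ) (univ ×ˢ S)) (hS : IsCompact S) (hZ : IsClosed Z)
    (hx₁ : x₁ ∈ S) (h1 : ψ 1 x₁ ∈ Z) :
    ∃ t₀ ∈ Icc (0 : ℝ) 1, ∃ x₀ ∈ S, ψ t₀ x₀ ∈ Z ∧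
      ∀ t ∈ Icc (0 : ℝ) 1, ∀ x ∈ S, ψ t x ∈ Z → t₀ ≤ t := by
  have hT : IsCompact ((Icc (0 : ℝ) 1 ×ˢ S) ∩ Function.uncurry ψ ⁻¹' Z) :=
    (isCompact_Icc.prod hS).of_isClosed_subset ((hψ.mono (prod_mono (subset_univ _) le_rfl)
      ).preimage_isClosed_of_isClosed (isClosed_Icc.prod hS.isClosed) hZ) inter_subset_left
  obtain ⟨⟨t₀, x₀⟩, ⟨⟨ht₀, hx₀⟩, hZ₀⟩, hmin⟩ :=
    hT.exists_isMinOn ⟨(1, x₁), ⟨right_mem_Icc.2 zero_le_one, hx₁⟩, h1⟩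
      continuous_fst.continuousOn
  exact ⟨t₀, ht₀, x₀, hx₀, hZ₀, fun t ht x hx hZ => hmin (a := (t, x)) ⟨⟨ht, hx⟩, hZ⟩⟩

theorem inter_nonempty_of_translated_discs {E : Type*} [NormedAddCommGroup E]
    [NormedSpace ℂ E] {φ : ℂ → E} {r : ℝ} {p q : E} {Q : E → ℂ} {A B V : Set E}
    (hφ : DifferentiableOn ℂ φ (ball 0 1)) (hr : 0 ≤ r) (hr1 : r < 1) (hφ0 : φ 0 = p)
    (hQ : Differentiable ℂ Q) (hQp : Q p ≠ 0) (hQq : Q q = 0)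
    (hA : IsCompact A) (hB : IsClosed B) (hAB : Disjoint A B) (hqA : q ∈ A)
    (hzeros : ∀ t ∈ Icc (0 : ℝ) 1, ∀ x ∈ closedBall (0 : ℂ) r,
      Q (φ x + t • (q - p)) = 0 → φ x + t • (q - p) ∈ A ∪ B)
    (hcurve : ∀ x ∈ closedBall (0 : ℂ) r, φ x ≠ p → φ x ∈ V)
    (htube : ∀ t ∈ Icc (0 : ℝ) 1, ∀ x ∈ sphere (0 : ℂ) r, φ x + t • (q - p) ∈ V) :
    (A ∩ V).Nonempty := by
  set ψ : ℝ → ℂ → E := fun t x => φ x + t • (q - p) with hψ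
  have hball : closedBall (0 : ℂ) r ⊆ ball 0 1 := closedBall_subset_ball hr1
  have hψc : ContinuousOn (Function.uncurry ψ) (univ ×ˢ closedBall 0 r) :=
    (hφ.continuousOn.comp continuousOn_snd fun z hz => hball hz.2).add
      (continuous_fst.smul continuous_const).continuousOn
  obtain ⟨η, hη, hηAB⟩ := hAB.exists_thickenings hA hB
  have hnear : ∀ t ∈ Icc (0 : ℝ) 1, ∀ x ∈ closedBall (0 : ℂ) r, Q (ψ t x) = 0 →
      infDist (ψ t x) A < η → ψ t x ∈ A := fun t ht x hx h0 hd =>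
    (hzeros t ht x hx h0).resolve_right fun hB' => hηAB.ne_of_mem
      ((mem_thickening_iff_infDist_lt ⟨q, hqA⟩).2 hd) (self_subset_thickening hη _ hB') rfl
  have h1 : ψ 1 0 ∈ A ∩ Q ⁻¹' {0} := by
    simp only [hψ, hφ0, one_smul, add_sub_cancel]
    exact ⟨hqA, hQq⟩
  obtain ⟨t₀, ht₀, x₀, hx₀, ⟨hA₀, hQ₀⟩, hmin⟩ := exists_first_mem_of_isClosed hψc
    (isCompact_closedBall 0 r) (hA.isClosed.inter (isClosed_singleton.preimage hQ.continuous))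
    (mem_closedBall_self hr) h1
  rcases ht₀.1.eq_or_lt with rfl | ht₀_pos
  · refine ⟨_, hA₀, ?_⟩
    simp only [hψ, zero_smul, add_zero] at hA₀ hQ₀ ⊢
    exact hcurve x₀ hx₀ fun h => hQp (h ▸ hQ₀)
  by_cases hsphere : ∃ x ∈ sphere (0 : ℂ) r, Q (ψ t₀ x) = 0 ∧ infDist (ψ t₀ x) A ≤ η / 2
  · obtain ⟨x, hx, h0, hd⟩ := hsphere
    exact ⟨_, hnear t₀ ht₀ x (sphere_subset_closedBall hx) h0 (by linarith),
      htube t₀ ht₀ x hx⟩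
  -- Otherwise the first contact is interior and away from the circle, so by Hurwitz's argument
  -- it already happens slightly before `t₀`.
  push Not at hsphere
  exfalso
  have hψd : ∀ t, DifferentiableOn ℂ (ψ t) (ball 0 r) := fun t =>
    (hφ.mono (ball_subset_ball hr1.le)).add_const _
  obtain ⟨t, ⟨x, hx, hx0, hxd⟩, ht_pos, ht_lt⟩ :=
    ((eventually_exists_zero_near hψc hψd hQ hη hx₀ hA₀ hQ₀ (hnear t₀ ht₀) hsphere
      |>.filter_mono nhdsWithin_le_nhds).and (Ioo_mem_nhdsLT ht₀_pos)).exists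
  have ht : t ∈ Icc (0 : ℝ) 1 := ⟨ht_pos.le, ht_lt.le.trans ht₀.2⟩
  linarith [hmin t ht x hx ⟨hnear t ht x hx hx0 hxd, hx0⟩]

theorem mem_connectedComponentIn_of_translated_discs {E : Type*} [NormedAddCommGroup E]
    [NormedSpace ℂ E] [ProperSpace E] {O : Set E} {x₁ p q : E} {φ : ℂ → E} {r R : ℝ}
    {Q : E → ℂ} (hO : IsOpen O) (hφ : DifferentiableOn ℂ φ (ball 0 1)) (hr : 0 ≤ r)
    (hr1 : r < 1) (hφ0 : φ 0 = p) (hQ : Differentiable ℂ Q) (hQp : Q p ≠ 0) (hQq : Q q = 0)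
    (hq : q ∈ closedBall p R) (hzeros : Q ⁻¹' {0} ∩ closedBall p R ⊆ O)
    (hdiscs : ∀ t ∈ Icc (0 : ℝ) 1, ∀ x ∈ closedBall (0 : ℂ) r,
      φ x + t • (q - p) ∈ closedBall p R)
    (hcurve : ∀ x ∈ closedBall (0 : ℂ) r, φ x ≠ p → φ x ∈ connectedComponentIn O x₁)
    (htube : ∀ t ∈ Icc (0 : ℝ) 1, ∀ x ∈ sphere (0 : ℂ) r,
      φ x + t • (q - p) ∈ connectedComponentIn O x₁) :
    q ∈ connectedComponentIn O x₁ := by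
  have hY : IsCompact (Q ⁻¹' {0} ∩ closedBall p R) :=
    (isCompact_closedBall p R).of_isClosed_subset
      ((isClosed_singleton.preimage hQ.continuous).inter isClosed_closedBall) inter_subset_right
  refine mem_connectedComponentIn_of_forall_isCompact_meets hO hY hzeros ⟨hQq, hq⟩
    fun A hAY hA hB hqA => inter_nonempty_of_translated_discs hφ hr hr1 hφ0 hQ hQp
      (hAY hqA).1 hA hB disjoint_sdiff_right hqA (fun t ht x hx h0 => ?_) hcurve htube
  rw [union_sdiff_self]
  exact subset_union_right ⟨h0, hdiscs t ht x hx⟩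

theorem exists_pos_mem_connectedComponentIn_of_zero {E : Type*} [NormedAddCommGroup E]
    [NormedSpace ℂ E] [ProperSpace E] {O : Set E} {x₁ p : E} {φ : ℂ → E} {δ : ℝ}
    (hO : IsOpen O) (hδ : 0 < δ) (hφ : DifferentiableOn ℂ φ (ball 0 1))
    (hφc : ∃ a ∈ ball (0 : ℂ) 1, ∃ b ∈ ball (0 : ℂ) 1, φ a ≠ φ b) (hφ0 : φ 0 = p)
    (hcurve : ∀ x ∈ ball (0 : ℂ) 1, φ x ≠ p → φ x ∈ connectedComponentIn O x₁) :
    ∃ ε > 0, ∀ q ∈ ball p ε, ∀ Q : E → ℂ, Differentiable ℂ Q → Q q = 0 → Q p ≠ 0 →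
      Q ⁻¹' {0} ∩ closedBall p δ ⊆ O → q ∈ connectedComponentIn O x₁ := by
  obtain ⟨r, hr, hr1, hφr, hφp⟩ := exists_radius_ne_on_sphere hφ hφc (half_pos hδ)
  rw [hφ0] at hφr hφp
  have hball : closedBall (0 : ℂ) r ⊆ ball 0 1 := closedBall_subset_ball hr1
  obtain ⟨τ, hτ, hτV⟩ : ∃ τ, 0 < τ ∧ cthickening τ (φ '' sphere 0 r) ⊆ connectedComponentIn O x₁ :=
    ((isCompact_sphere 0 r).image_of_continuousOn
      (hφ.continuousOn.mono (sphere_subset_closedBall.trans hball))).exists_cthickening_subset_open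
      hO.connectedComponentIn (image_subset_iff.2 fun x hx =>
        hcurve x (hball (sphere_subset_closedBall hx)) (hφp x hx))
  refine ⟨min τ (δ / 2), lt_min hτ (half_pos hδ), fun q hq Q hQ hQq hQp hzeros => ?_⟩
  have hqp : ‖q - p‖ < min τ (δ / 2) := by rwa [← dist_eq_norm, ← mem_ball]
  have hshift : ∀ t ∈ Icc (0 : ℝ) 1, ‖t • (q - p)‖ < min τ (δ / 2) := fun t ht => by
    rw [norm_smul, Real.norm_of_nonneg ht.1]
    exact (mul_le_of_le_one_left (norm_nonneg _) ht.2).trans_lt hqp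
  refine mem_connectedComponentIn_of_translated_discs hO hφ hr.le hr1 hφ0 hQ hQp hQq
    (ball_subset_closedBall (ball_subset_ball ((min_le_right _ _).trans (half_le_self hδ.le)) hq))
    hzeros
    (fun t ht x hx => ?_) (fun x hx => hcurve x (hball hx)) fun t ht x hx => hτV ?_
  · rw [mem_closedBall]
    calc dist (φ x + t • (q - p)) p ≤ ‖t • (q - p)‖ + dist (φ x) p := by
          simpa only [dist_self_add_left] using dist_triangle (φ x + t • (q - p)) (φ x) p
      _ ≤ δ / 2 + δ / 2 := add_le_add ((hshift t ht).le.trans (min_le_right _ _))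
          (mem_ball.1 (hφr x hx)).le
      _ = δ := add_halves δ
  · refine mem_cthickening_of_dist_le _ (φ x) _ _ (mem_image_of_mem φ hx) ?_
    rw [dist_self_add_left]
    exact (hshift t ht).le.trans (min_le_left _ _)

theorem MvPolynomial.differentiable_eval_euclideanSpace {n : ℕ} (P : MvPolynomial (Fin n) ℂ) :
    Differentiable ℂ fun z : EuclideanSpace ℂ (Fin n) => MvPolynomial.eval (fun i => z i) P :=
  fun z => (AnalyticAt.aeval_mvPolynomial (f := fun z : EuclideanSpace ℂ (Fin n) => (z ·))
    (fun i => (EuclideanSpace.proj (𝕜 := ℂ) i).analyticAt z) P).differentiableAt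

theorem mem_ratHull_of_forall_exists_eval_eq_zero {n : ℕ} {K : Set (EuclideanSpace ℂ (Fin n))}
    {q : EuclideanSpace ℂ (Fin n)}
    (h : ∀ P : MvPolynomial (Fin n) ℂ, MvPolynomial.eval (fun i => q i) P = 0 →
      ∃ w ∈ K, MvPolynomial.eval (fun i => w i) P = 0) :
    q ∈ ratHull K := by
  intro P
  obtain ⟨w, hw, hPw⟩ := h (P - MvPolynomial.C (MvPolynomial.eval (fun i => q i) P)) (by simp)
  exact ⟨w, hw, by simpa [sub_eq_zero] using hPw⟩

theorem IsRealAnalyticHypersurface.isOpen_diff {n : ℕ} {U H : Set (EuclideanSpace ℂ (Fin n))}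
    (hH : IsRealAnalyticHypersurface U H) : IsOpen (U \ H) := by
  obtain ⟨hU, -, ρ, hρ, rfl, -⟩ := hH
  rw [show U \ {z | z ∈ U ∧ ρ z = 0} = U ∩ ρ ⁻¹' {0}ᶜ by ext; simp +contextual]
  exact hρ.continuousOn.isOpen_inter_preimage hU isOpen_compl_singleton

theorem rational_hull_contains_complement_side_general {n : ℕ}
    (U H : Set (EuclideanSpace ℂ (Fin n)))
    (hH : IsRealAnalyticHypersurface U H)
    (p : EuclideanSpace ℂ (Fin n)) (hp : p ∈ H)
    (φ : ℂ → EuclideanSpace ℂ (Fin n)) (C V : Set (EuclideanSpace ℂ (Fin n)))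
    (hC : IsSupportCurveVia U H p φ C)
    (hV : IsComponentOfComplement U H V)
    (hCV : C \ {p} ⊆ V) :
    ∀ K : Set (EuclideanSpace ℂ (Fin n)), IsCompact K → K ⊆ H →
      (∃ δ > 0, H ∩ ball p δ ⊆ K) →
      ∃ ε > 0, ball p ε \ V ⊆ ratHull K := by
  rintro K - - ⟨δ₀, hδ₀, hK⟩
  have hO := hH.isOpen_diff
  obtain ⟨hU, -, _, -, hH_eq, -⟩ := hH
  obtain ⟨hφ, -, hφc, hφ0, rfl, -⟩ := hC
  obtain ⟨x₁, -, rfl⟩ := hV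
  obtain ⟨δ₁, hδ₁, hδ₁U⟩ := Metric.isOpen_iff.1 hU p (hH_eq ▸ hp).1
  have hδ : closedBall p (min δ₀ δ₁ / 2) ⊆ ball p δ₀ ∩ ball p δ₁ := fun y hy =>
    ⟨closedBall_subset_ball (by linarith [min_le_left δ₀ δ₁, lt_min hδ₀ hδ₁]) hy,
      closedBall_subset_ball (by linarith [min_le_right δ₀ δ₁, lt_min hδ₀ hδ₁]) hy⟩
  obtain ⟨ε, hε, hqV⟩ := exists_pos_mem_connectedComponentIn_of_zero hO
    (half_pos (lt_min hδ₀ hδ₁)) hφ hφc hφ0 fun x hx hne => hCV ⟨⟨x, hx, rfl⟩, hne⟩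
  refine ⟨ε, hε, fun q ⟨hq, hq_notV⟩ => mem_ratHull_of_forall_exists_eval_eq_zero fun P hP => ?_⟩
  by_contra! hPK
  refine hq_notV (hqV q hq _ (MvPolynomial.differentiable_eval_euclideanSpace P) hP
    (hPK p (hK ⟨hp, mem_ball_self hδ₀⟩)) fun y ⟨hy0, hy⟩ => ⟨hδ₁U (hδ hy).2, fun hyH => ?_⟩)
  exact hPK y (hK ⟨hyH, (hδ hy).1⟩) hy0

theorem rational_hull_contains_complement_side {n : ℕ} (hn : 2 ≤ n)
    (U H : Set (EuclideanSpace ℂ (Fin n)))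
    (hH : IsRealAnalyticHypersurface U H)
    (p : EuclideanSpace ℂ (Fin n)) (hp : p ∈ H)
    (φ : ℂ → EuclideanSpace ℂ (Fin n)) (C V : Set (EuclideanSpace ℂ (Fin n)))
    (hC : IsSupportCurveVia U H p φ C)
    (hV : IsComponentOfComplement U H V)
    (hCV : C \ {p} ⊆ V) :
    ∀ K : Set (EuclideanSpace ℂ (Fin n)), IsCompact K → K ⊆ H →
      (∃ δ > 0, H ∩ ball p δ ⊆ K) →
      ∃ ε > 0, ball p ε \ V ⊆ ratHull K :=
  rational_hull_contains_complement_side_general U H hH p hp φ C V hC hV hCV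

end
end

section
/- Let k ≥ 1 be an integer, let r > 0, and let f₂, …, fₙ : D_r → ℂ be holomorphic on D_r = {t ∈ ℂ : |t| < r} with fᵢ(0) = 0. Define φ : D_r × ℂ^{n-1} → ℂⁿ by φ(z₁, …, zₙ) = (z₁^k, z₂ + f₂(z₁), …, zₙ + fₙ(z₁)). Then: (a) for every neighborhood W of 0 in D_r × ℂ^{n-1}, the image φ(W) contains a neighborhood of 0 in ℂⁿ; consequently (b) if S is a holomorphic function on a neighborhood of 0 in ℂⁿ such that S(φ(z)) = 0 for all z in some neighborhood of 0, then S vanishes identically on a neighborhood of 0. -/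
open Metric

noncomputable section

/-
Up to the shear `z ↦ (z₁, z₂ + f₂(z₁), …, zₙ + fₙ(z₁))`, which is undone by subtracting
`fᵢ(z₁)`, the map `φ` is `z₁ ↦ z₁ᵏ` in the first coordinate. A principal branch of the `k`-th
root is discontinuous but still tends to `0` at `0`, so composing it with the inverse shear gives
a right inverse of `φ` tending to `0` at `0`. Hence `𝓝 0 ≤ map φ (𝓝 0)`: `φ` is open at `0`, and
anything holding near `0` after composing with `φ` already holds near `0`.
-/

open Filter Topology

theorem Complex.tendsto_cpow_natCast_inv_nhds_zero {k : ℕ} (hk : k ≠ 0) :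
    Tendsto (fun w : ℂ => w ^ ((k : ℂ)⁻¹)) (𝓝 0) (𝓝 0) := by
  have hre : 0 < ((k : ℂ)⁻¹).re := by simp [Nat.pos_of_ne_zero hk]
  simpa [ContinuousAt, Complex.zero_cpow (ne_of_apply_ne Complex.re hre.ne')] using
    Complex.continuousAt_cpow_const_of_re_pos (z := 0) (Or.inl le_rfl) hre

section PuiseuxStraightening

variable {n : ℕ} [NeZero n] (k : ℕ) (f : Fin n → ℂ → ℂ)

def puiseuxStraightening (z : EuclideanSpace ℂ (Fin n)) : EuclideanSpace ℂ (Fin n) :=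
  WithLp.toLp 2 fun j => if j = 0 then z 0 ^ k else z j + f j (z 0)

def puiseuxStraighteningRightInv (w : EuclideanSpace ℂ (Fin n)) : EuclideanSpace ℂ (Fin n) :=
  WithLp.toLp 2 fun j => if j = 0 then w 0 ^ ((k : ℂ)⁻¹) else w j - f j (w 0 ^ ((k : ℂ)⁻¹))

variable {k f}

theorem puiseuxStraightening_rightInv (hk : k ≠ 0) (w : EuclideanSpace ℂ (Fin n)) :
    puiseuxStraightening k f (puiseuxStraighteningRightInv k f w) = w := by
  ext j
  by_cases hj : j = 0
  · subst hj
    simp [puiseuxStraightening, puiseuxStraighteningRightInv, Complex.cpow_nat_inv_pow _ hk]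
  · simp [puiseuxStraightening, puiseuxStraighteningRightInv, hj]

theorem tendsto_puiseuxStraighteningRightInv (hk : k ≠ 0)
    (hf : ∀ i, i ≠ 0 → ContinuousAt (f i) 0) (hf0 : ∀ i, i ≠ 0 → f i 0 = 0) :
    Tendsto (puiseuxStraighteningRightInv k f) (𝓝 0) (𝓝 0) := by
  have hroot : Tendsto (fun w : EuclideanSpace ℂ (Fin n) => w 0 ^ ((k : ℂ)⁻¹)) (𝓝 0) (𝓝 0) :=
    (Complex.tendsto_cpow_natCast_inv_nhds_zero hk).comp
      ((EuclideanSpace.proj (0 : Fin n)).continuous.tendsto' 0 0 rfl)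
  have hcoord : ∀ j, Tendsto (fun w : EuclideanSpace ℂ (Fin n) =>
      if j = 0 then w 0 ^ ((k : ℂ)⁻¹) else w j - f j (w 0 ^ ((k : ℂ)⁻¹))) (𝓝 0) (𝓝 0) := by
    intro j
    by_cases hj : j = 0
    · simpa [hj] using hroot
    · simpa [hj, hf0 j hj] using
        ((EuclideanSpace.proj j).continuous.tendsto' 0 0 rfl).sub
          ((hf j hj).tendsto.comp hroot)
  exact ((PiLp.continuous_toLp 2 _).tendsto' 0 0 (WithLp.toLp_zero 2)).comp
    (tendsto_pi_nhds.2 hcoord)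

theorem nhds_zero_le_map_puiseuxStraightening (hk : k ≠ 0)
    (hf : ∀ i, i ≠ 0 → ContinuousAt (f i) 0) (hf0 : ∀ i, i ≠ 0 → f i 0 = 0) :
    𝓝 0 ≤ map (puiseuxStraightening k f) (𝓝 0) :=
  le_map_of_right_inverse (.of_forall (puiseuxStraightening_rightInv hk))
    (tendsto_puiseuxStraighteningRightInv hk hf hf0)

end PuiseuxStraightening

theorem puiseux_straightening_map_is_open_at_zero {n k : ℕ} [NeZero n] (hk : 1 ≤ k)
    {r : ℝ} (hr : 0 < r)
    (f : Fin n → ℂ → ℂ)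
    (hf : ∀ i : Fin n, i ≠ 0 → DifferentiableOn ℂ (f i) (ball 0 r))
    (hf0 : ∀ i : Fin n, i ≠ 0 → f i 0 = 0)
    (φ : EuclideanSpace ℂ (Fin n) → EuclideanSpace ℂ (Fin n))
    (hφ : φ = fun z => (WithLp.toLp 2 (fun j => if j = 0 then (z 0) ^ k else z j + f j (z 0)) :
      EuclideanSpace ℂ (Fin n))) :
    (∀ W : Set (EuclideanSpace ℂ (Fin n)),
      W ⊆ {z | z 0 ∈ ball (0 : ℂ) r} → W ∈ nhds (0 : EuclideanSpace ℂ (Fin n)) →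
        φ '' W ∈ nhds (0 : EuclideanSpace ℂ (Fin n))) ∧
    (∀ S : EuclideanSpace ℂ (Fin n) → ℂ,
      ∀ V ∈ nhds (0 : EuclideanSpace ℂ (Fin n)), AnalyticOnNhd ℂ S V →
        (∀ᶠ z in nhds (0 : EuclideanSpace ℂ (Fin n)), S (φ z) = 0) →
        ∀ᶠ z in nhds (0 : EuclideanSpace ℂ (Fin n)), S z = 0) := by
  have hφ' : φ = puiseuxStraightening k f := hφ
  subst hφ'
  have hfc : ∀ i, i ≠ 0 → ContinuousAt (f i) 0 := fun i hi =>
    (hf i hi).continuousOn.continuousAt (Metric.ball_mem_nhds 0 hr)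
  have hopen := nhds_zero_le_map_puiseuxStraightening (Nat.one_le_iff_ne_zero.mp hk) hfc hf0
  exact ⟨fun W _ hW => hopen (image_mem_map hW), fun S _ _ _ hSφ => hopen hSφ⟩
end
end

section
/- Let K ⊂ ℂⁿ be compact and let Φ : [0,1] × closure(𝔻) → ℂⁿ be continuous, where 𝔻 is the open unit disc in ℂ, such that for every t ∈ [0,1] the map Φ(t, ·) is holomorphic on 𝔻 and Φ(t, ∂𝔻) ⊆ K, and such that Φ(0, ·) is a constant map. Then Φ(1, closure(𝔻)) ⊆ K̂_rat; that is, the final disc of a continuous family of analytic discs attached to K that starts at a constant disc is contained in the rational hull of K. -/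
open Metric

noncomputable section

/-!
Fix a polynomial `P` and suppose `w = P(Φ(1, ζ₀)) ∉ P(K)`. The functions `f_t = P ∘ Φ(t, ·) - w`
are holomorphic on the disc and have no zeros on the circle, so `|f|` is bounded below by some
`δ > 0` on `[0,1] × ∂𝔻`. By the minimum modulus principle, every zero-free `f_t` satisfies
`|f_t| ≥ δ` on the whole closed disc, so the zero-free parameters form a closed set; the
parameters where `f_t` has a zero form a closed set as well, being the projection of a compact set.
Since `f_0` is a nonzero constant, connectedness of `[0,1]` shows that `f_1` is zero-free,
contradicting `f_1(ζ₀) = 0`.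
-/

open Set Bornology

theorem MvPolynomial.differentiable_eval_euclidean {n : ℕ} (P : MvPolynomial (Fin n) ℂ) :
    Differentiable ℂ (fun x : EuclideanSpace ℂ (Fin n) => MvPolynomial.eval (fun i => x i) P) :=
  fun x => ((AnalyticOnNhd.eval_continuousLinearMap
    (PiLp.continuousLinearEquiv 2 ℂ (fun _ : Fin n => ℂ)).toContinuousLinearMap P) x
    (mem_univ x)).differentiableAt

section HolomorphicFamily

variable {E : Type*} [NormedAddCommGroup E] [NormedSpace ℂ E] [Nontrivial E]

theorem Complex.le_norm_of_forall_mem_frontier_le_norm {f : E → ℂ} {U : Set E}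
    (hU : IsBounded U) (hf : DiffContOnCl ℂ f U) (hf₀ : ∀ z ∈ closure U, f z ≠ 0) {δ : ℝ}
    (hδ : ∀ z ∈ frontier U, δ ≤ ‖f z‖) {z : E} (hz : z ∈ closure U) : δ ≤ ‖f z‖ := by
  rcases le_or_gt δ 0 with hδ₀ | hδ₀
  · exact hδ₀.trans (norm_nonneg _)
  have hinv : ‖(f z)⁻¹‖ ≤ δ⁻¹ := by
    refine Complex.norm_le_of_forall_mem_frontier_norm_le hU (hf.inv hf₀) (fun w hw => ?_) hz
    rw [Pi.inv_apply, norm_inv]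
    exact inv_anti₀ hδ₀ (hδ w hw)
  rw [norm_inv] at hinv
  exact (inv_le_inv₀ (norm_pos_iff.2 (hf₀ z hz)) hδ₀).1 hinv

section ParametrizedFamily

variable {α β G : Type*} [TopologicalSpace α] [TopologicalSpace β] [NormedAddCommGroup G]
  {T : Set α} {C : Set β} {F : α → β → G}

theorem isClosed_fst_image_zeros [T2Space α] [T2Space β] (hT : IsCompact T) (hC : IsCompact C)
    (hF : ContinuousOn (fun p : α × β => F p.1 p.2) (T ×ˢ C)) :
    IsClosed (Prod.fst '' {p ∈ T ×ˢ C | F p.1 p.2 = 0}) := by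
  have hTC : IsCompact (T ×ˢ C) := hT.prod hC
  have hZ : IsClosed {p ∈ T ×ˢ C | F p.1 p.2 = 0} :=
    hF.preimage_isClosed_of_isClosed hTC.isClosed isClosed_singleton
  exact ((hTC.of_isClosed_subset hZ fun _ hp => hp.1).image continuous_fst).isClosed

theorem isClosed_setOf_forall_le_norm (hT : IsClosed T)
    (hF : ContinuousOn (fun p : α × β => F p.1 p.2) (T ×ˢ C)) (δ : ℝ) :
    IsClosed {t | t ∈ T ∧ ∀ z ∈ C, δ ≤ ‖F t z‖} := by
  have heq : {t | t ∈ T ∧ ∀ z ∈ C, δ ≤ ‖F t z‖} =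
      T ∩ ⋂ z ∈ C, T ∩ (fun t => ‖F t z‖) ⁻¹' Ici δ := by
    ext t
    simp only [mem_ofPred_eq, mem_inter_iff, mem_iInter, mem_preimage, mem_Ici]
    exact ⟨fun ⟨ht, h⟩ => ⟨ht, fun z hz => ⟨ht, h z hz⟩⟩,
      fun ⟨ht, h⟩ => ⟨ht, fun z hz => (h z hz).2⟩⟩
  rw [heq]
  refine hT.inter (isClosed_biInter fun z hz => ?_)
  have hslice : ContinuousOn (fun t => F t z) T :=
    hF.comp (continuous_id.prodMk continuous_const).continuousOn fun t ht => ⟨ht, hz⟩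
  exact hslice.norm.preimage_isClosed_of_isClosed hT isClosed_Ici

end ParametrizedFamily

variable [ProperSpace E] {α : Type*} [TopologicalSpace α] {T : Set α} {U : Set E}
  {F : α → E → ℂ}

theorem forall_ne_zero_of_ne_zero_on_frontier [T2Space α] (hTc : IsCompact T)
    (hTp : IsPreconnected T) (hU : IsBounded U)
    (hF : ContinuousOn (fun p : α × E => F p.1 p.2) (T ×ˢ closure U))
    (hhol : ∀ t ∈ T, DifferentiableOn ℂ (F t) U)
    (hfr : ∀ t ∈ T, ∀ z ∈ frontier U, F t z ≠ 0)
    {t₀ : α} (ht₀ : t₀ ∈ T) (h₀ : ∀ z ∈ closure U, F t₀ z ≠ 0) :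
    ∀ t ∈ T, ∀ z ∈ closure U, F t z ≠ 0 := by
  obtain ⟨δ, hδ, hδfr⟩ : ∃ δ, 0 < δ ∧ ∀ p ∈ T ×ˢ frontier U, δ ≤ ‖F p.1 p.2‖ :=
    (hTc.prod (hU.isCompact_closure.of_isClosed_subset isClosed_frontier
      frontier_subset_closure)).exists_forall_le'
      (hF.mono (prod_mono_right frontier_subset_closure)).norm
      fun p hp => norm_pos_iff.2 (hfr p.1 hp.1 p.2 hp.2)
  set Good := {t | t ∈ T ∧ ∀ z ∈ closure U, δ ≤ ‖F t z‖}
  set Bad := Prod.fst '' {p ∈ T ×ˢ closure U | F p.1 p.2 = 0}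
  have hslice : ∀ t ∈ T, ContinuousOn (F t) (closure U) := fun t ht =>
    hF.comp (continuous_const.prodMk continuous_id).continuousOn fun z hz => ⟨ht, hz⟩
  have hcover : T ⊆ Good ∪ Bad := by
    intro t ht
    by_cases h : ∃ z ∈ closure U, F t z = 0
    · obtain ⟨z, hz, hz₀⟩ := h
      exact Or.inr ⟨(t, z), ⟨⟨ht, hz⟩, hz₀⟩, rfl⟩
    · exact Or.inl ⟨ht, fun z hz => Complex.le_norm_of_forall_mem_frontier_le_norm hU
        ⟨hhol t ht, hslice t ht⟩ (fun z hz h₀ => h ⟨z, hz, h₀⟩)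
        (fun w hw => hδfr (t, w) ⟨ht, hw⟩) hz⟩
  have hGood : ∀ t ∈ Good, ∀ z ∈ closure U, F t z ≠ 0 := fun t ht z hz hz₀ => by
    have := ht.2 z hz
    rw [hz₀, norm_zero] at this
    exact hδ.not_ge this
  have hdisj : Disjoint Good Bad := by
    rw [Set.disjoint_left]
    rintro t ht ⟨⟨t, z⟩, ⟨⟨-, hz⟩, hz₀⟩, rfl⟩
    exact hGood t ht z hz hz₀
  have ht₀Bad : t₀ ∉ Bad := by
    rintro ⟨⟨t, z⟩, ⟨⟨-, hz⟩, hz₀⟩, rfl⟩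
    exact h₀ z hz hz₀
  rcases (isPreconnected_iff_subset_of_fully_disjoint_closed hTc.isClosed).1 hTp Good Bad
    (isClosed_setOf_forall_le_norm hTc.isClosed hF δ)
    (isClosed_fst_image_zeros hTc hU.isCompact_closure hF) hcover hdisj with hT | hT
  · exact fun t ht => hGood t (hT ht)
  · exact absurd (hT ht₀) ht₀Bad

end HolomorphicFamily

theorem continuous_family_of_discs_in_rational_hull_general {n : ℕ}
    (K : Set (EuclideanSpace ℂ (Fin n)))
    (Φ : ℝ → ℂ → EuclideanSpace ℂ (Fin n))
    (hcont : ContinuousOn (fun p : ℝ × ℂ => Φ p.1 p.2)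
      (Set.Icc (0 : ℝ) 1 ×ˢ closedBall (0 : ℂ) 1))
    (hhol : ∀ t ∈ Set.Icc (0 : ℝ) 1, DifferentiableOn ℂ (Φ t) (ball 0 1))
    (hbd : ∀ t ∈ Set.Icc (0 : ℝ) 1, Φ t '' sphere 0 1 ⊆ K)
    (hconst : ∃ c : EuclideanSpace ℂ (Fin n), ∀ ζ ∈ closedBall (0 : ℂ) 1, Φ 0 ζ = c) :
    Φ 1 '' closedBall 0 1 ⊆ ratHull K := by
  rintro _ ⟨ζ₀, hζ₀, rfl⟩ P
  set ev := fun x : EuclideanSpace ℂ (Fin n) => MvPolynomial.eval (fun i => x i) P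
  by_contra hw
  have hev := MvPolynomial.differentiable_eval_euclidean P
  have hsphere : ∀ t ∈ Icc (0 : ℝ) 1, ∀ ζ ∈ sphere (0 : ℂ) 1, ev (Φ t ζ) - ev (Φ 1 ζ₀) ≠ 0 :=
    fun t ht ζ hζ h => hw ⟨Φ t ζ, hbd t ht ⟨ζ, hζ, rfl⟩, sub_eq_zero.1 h⟩
  obtain ⟨c, hc⟩ := hconst
  have hU : closure (ball (0 : ℂ) 1) = closedBall 0 1 := closure_ball 0 one_ne_zero
  refine forall_ne_zero_of_ne_zero_on_frontier (T := Icc 0 1) (U := ball (0 : ℂ) 1)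
    (F := fun t ζ => ev (Φ t ζ) - ev (Φ 1 ζ₀)) isCompact_Icc isPreconnected_Icc isBounded_ball
    ?_ (fun t ht => (hev.comp_differentiableOn (hhol t ht)).sub_const _) ?_
    (left_mem_Icc.2 zero_le_one) ?_ 1 (right_mem_Icc.2 zero_le_one) ζ₀ (hU ▸ hζ₀) (sub_self _)
  · rw [hU]
    exact (hev.continuous.comp_continuousOn hcont).sub continuousOn_const
  · rwa [frontier_ball 0 one_ne_zero]
  · rw [hU]
    intro ζ hζ
    rw [hc ζ hζ, ← hc 1 (by simp)]
    exact hsphere 0 (left_mem_Icc.2 zero_le_one) 1 (by simp)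

theorem continuous_family_of_discs_in_rational_hull {n : ℕ}
    (K : Set (EuclideanSpace ℂ (Fin n))) (hK : IsCompact K)
    (Φ : ℝ → ℂ → EuclideanSpace ℂ (Fin n))
    (hcont : ContinuousOn (fun p : ℝ × ℂ => Φ p.1 p.2)
      (Set.Icc (0 : ℝ) 1 ×ˢ closedBall (0 : ℂ) 1))
    (hhol : ∀ t ∈ Set.Icc (0 : ℝ) 1, DifferentiableOn ℂ (Φ t) (ball 0 1))
    (hbd : ∀ t ∈ Set.Icc (0 : ℝ) 1, Φ t '' sphere 0 1 ⊆ K)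
    (hconst : ∃ c : EuclideanSpace ℂ (Fin n), ∀ ζ ∈ closedBall (0 : ℂ) 1, Φ 0 ζ = c) :
    Φ 1 '' closedBall 0 1 ⊆ ratHull K :=
  continuous_family_of_discs_in_rational_hull_general K Φ hcont hhol hbd hconst
end
end
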